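/- Fix an integer δ ≥ 1. Let L_{δ,<} be the first-order language with a constant symbol 0, a unary function symbol S, a unary relation symbol P_δ, and a binary relation symbol <, interpreted on ℕ with 0, the successor function, the set δℕ of multiples of δ, and the usual strict order; let L_δ be the sublanguage without <. Suppose φ(x₁,…,xₙ) is a quantifier-free L_{δ,<}-formula that is stable with respect to every partition of its free variables. Then there is a quantifier-free L_δ-formula ψ(x₁,…,xₙ) such that for all a₁,…,aₙ ∈ ℕ, φ(a₁,…,aₙ) holds in this structure if and only if ψ(a₁,…,aₙ) holds. -/

import Mathlib

open FirstOrder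

/-- An `N`-ladder for a binary relation. -/
def HasLadder {X Y : Type*} (R : X → Y → Prop) (N : ℕ) : Prop :=
  ∃ (a : Fin (N + 1) → X) (b : Fin (N + 1) → Y), ∀ i j, R (a i) (b j) ↔ i ≤ j

/-- A binary relation is stable if for some `N` it admits no `N`-ladder. -/
def StableRel {X Y : Type*} (R : X → Y → Prop) : Prop := ∃ N : ℕ, ¬ HasLadder R N

/-- The language `L_{δ,<}` with constant `0`, unary function `S`, unary relation `P_δ`,
and binary relation `<`. -/
def Ldlt : FirstOrder.Language where
  Functions := fun n => match n with | 0 => Unit | 1 => Unit | _ => Empty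
  Relations := fun n => match n with | 1 => Unit | 2 => Unit | _ => Empty

/-- The sublanguage `L_δ` without `<`. -/
def Ld : FirstOrder.Language where
  Functions := fun n => match n with | 0 => Unit | 1 => Unit | _ => Empty
  Relations := fun n => match n with | 1 => Unit | _ => Empty

/-- The `L_{δ,<}`-structure on ℕ interpreting `0`, successor, the multiples of `δ`, and `<`. -/
def LdltStruct (δ : ℕ) : Ldlt.Structure ℕ where
  funMap {n} f x :=
    match n, f with
    | 0, _ => 0
    | 1, _ => (x 0) + 1
  RelMap {n} r x :=
    match n, r with
    | 1, _ => δ ∣ x 0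
    | 2, _ => x 0 < x 1

/-- The `L_δ`-structure on ℕ interpreting `0`, successor, and the multiples of `δ`. -/
def LdStruct (δ : ℕ) : Ld.Structure ℕ where
  funMap {n} f x :=
    match n, f with
    | 0, _ => 0
    | 1, _ => (x 0) + 1
  RelMap {n} r x :=
    match n, r with
    | 1, _ => δ ∣ x 0

/-- Realization of an `L_{δ,<}`-formula in `(ℕ, 0, S, δℕ, <)`. -/
def RealizeLt (δ : ℕ) {n : ℕ} (φ : Ldlt.Formula (Fin n)) (v : Fin n → ℕ) : Prop :=
  letI := LdltStruct δ
  φ.Realize v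

/-- Realization of an `L_δ`-formula in `(ℕ, 0, S, δℕ)`. -/
def RealizeD (δ : ℕ) {n : ℕ} (ψ : Ld.Formula (Fin n)) (v : Fin n → ℕ) : Prop :=
  letI := LdStruct δ
  ψ.Realize v

namespace Stmt4Aux

open FirstOrder.Language
open scoped Classical

variable {n : ℕ}

/-- Same "unordered" local data: residues, small values, small differences. -/
def Data (δ M : ℕ) (v w : Fin n → ℕ) : Prop :=
  (∀ i, v i % δ = w i % δ) ∧ (∀ i, v i ≤ M ∨ w i ≤ M → v i = w i) ∧
  (∀ i j, ((v i : ℤ) - v j).natAbs ≤ M ∨ ((w i : ℤ) - w j).natAbs ≤ M →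
    (v i : ℤ) - v j = (w i : ℤ) - w j)

/-- Same local data plus same order pattern. -/
def SameClamp (δ M : ℕ) (v w : Fin n → ℕ) : Prop :=
  Data δ M v w ∧ ∀ i j, v i ≤ v j ↔ w i ≤ w j

lemma Data.symm {δ M : ℕ} {v w : Fin n → ℕ} (h : Data δ M v w) : Data δ M w v :=
  ⟨fun i => (h.1 i).symm, fun i hi => (h.2.1 i hi.symm).symm,
   fun i j hij => (h.2.2 i j hij.symm).symm⟩

lemma Data.trans {δ M : ℕ} {u v w : Fin n → ℕ} (h1 : Data δ M u v) (h2 : Data δ M v w) :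
    Data δ M u w := by
  refine ⟨fun i => (h1.1 i).trans (h2.1 i), fun i hi => ?_, fun i j hij => ?_⟩
  · rcases hi with hi | hi
    · have e1 := h1.2.1 i (Or.inl hi)
      exact e1.trans (h2.2.1 i (Or.inl (e1 ▸ hi)))
    · have e2 := h2.2.1 i (Or.inr hi)
      exact (h1.2.1 i (Or.inr (e2.symm ▸ hi))).trans e2
  · rcases hij with hij | hij
    · have e1 := h1.2.2 i j (Or.inl hij)
      exact e1.trans (h2.2.2 i j (Or.inl (by rw [← e1]; exact hij)))
    · have e2 := h2.2.2 i j (Or.inr hij)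
      exact (h1.2.2 i j (Or.inr (by rw [e2]; exact hij))).trans e2

lemma SameClamp.symm {δ M : ℕ} {v w : Fin n → ℕ} (h : SameClamp δ M v w) : SameClamp δ M w v :=
  ⟨h.1.symm, fun i j => (h.2 i j).symm⟩

lemma SameClamp.mono {δ M M' : ℕ} (hMM : M ≤ M') {v w : Fin n → ℕ}
    (h : SameClamp δ M' v w) : SameClamp δ M v w := by
  refine ⟨⟨h.1.1, fun i hi => h.1.2.1 i ?_, fun i j hij => h.1.2.2 i j ?_⟩, h.2⟩
  · rcases hi with hi | hi
    · exact Or.inl (hi.trans hMM)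
    · exact Or.inr (hi.trans hMM)
  · rcases hij with hij | hij
    · exact Or.inl (hij.trans hMM)
    · exact Or.inr (hij.trans hMM)

/-- Shifting coordinates by amounts that respect the local structure yields a
`SameClamp`-equivalent valuation. -/
lemma sameClamp_shift {δ M : ℕ} (v g : Fin n → ℕ)
    (h1 : ∀ i, δ ∣ g i) (h2 : ∀ i, g i ≠ 0 → M < v i)
    (h3 : ∀ i j, v j ≤ v i → v i - v j ≤ M → g i = g j)
    (h4 : ∀ i j, v j ≤ v i → M < v i - v j → v j + g j + M < v i + g i)
    (w : Fin n → ℕ) (hw : ∀ i, w i = v i + g i) :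
    SameClamp δ M v w := by
  have horder : ∀ i j, v i ≤ v j ↔ w i ≤ w j := by
    intro i j
    rw [hw i, hw j]
    constructor
    · intro hle
      rcases le_or_gt (v j - v i) M with hs | hs
      · rw [h3 j i hle hs]; omega
      · have := h4 j i hle hs; omega
    · intro hle
      by_contra hlt
      push_neg at hlt
      rcases le_or_gt (v i - v j) M with hs | hs
      · rw [h3 i j hlt.le hs] at hle; omega
      · have := h4 i j hlt.le hs; omega
  refine ⟨⟨fun i => ?_, fun i hi => ?_, fun i j hij => ?_⟩, horder⟩
  · obtain ⟨k, hk⟩ := h1 i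
    simp [hw i, hk, Nat.add_mul_mod_self_left]
  · rw [hw i] at hi ⊢
    have : g i = 0 := by
      by_contra hg
      have := h2 i hg
      omega
    omega
  · rw [hw i, hw j] at hij ⊢
    have hgij : g i = g j := by
      rcases le_total (v j) (v i) with hle | hle
      · refine h3 i j hle ?_
        by_contra hs
        push_neg at hs
        have h4' := h4 i j hle hs
        rcases hij with hij | hij
        · omega
        · omega
      · refine (h3 j i hle ?_).symm
        by_contra hs
        push_neg at hs
        have h4' := h4 j i hle hs
        rcases hij with hij | hij
        · omega
        · omega
    push_cast
    omega


/-! ### Invariance of quantifier-free formulas under `SameClamp` -/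

section Inv

variable (δ : ℕ)

lemma ldlt_funMap0 (f : Ldlt.Functions 0) (x : Fin 0 → ℕ) :
    (letI := LdltStruct δ; Structure.funMap f x) = 0 := rfl

lemma ldlt_funMap1 (f : Ldlt.Functions 1) (x : Fin 1 → ℕ) :
    (letI := LdltStruct δ; Structure.funMap f x) = x 0 + 1 := rfl

lemma ldlt_relMap1 (r : Ldlt.Relations 1) (x : Fin 1 → ℕ) :
    (letI := LdltStruct δ; Structure.RelMap r x) = (δ ∣ x 0) := rfl

lemma ldlt_relMap2 (r : Ldlt.Relations 2) (x : Fin 2 → ℕ) :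
    (letI := LdltStruct δ; Structure.RelMap r x) = (x 0 < x 1) := rfl

/-- Every `Ldlt`-term is either a constant or a variable plus a constant. -/
lemma term_normal (t : Ldlt.Term ((Fin n) ⊕ (Fin 0))) :
    (∃ c : ℕ, ∀ env : (Fin n) ⊕ (Fin 0) → ℕ,
      (letI := LdltStruct δ; t.realize env) = c) ∨
    (∃ (i : Fin n) (c : ℕ), ∀ env,
      (letI := LdltStruct δ; t.realize env) = env (Sum.inl i) + c) := by
  letI := LdltStruct δ
  induction t with
  | var x =>
    rcases x with i | i
    · exact Or.inr ⟨i, 0, fun env => by simp [Term.realize_var]⟩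
    · exact i.elim0
  | func f ts ih =>
    rename_i l
    match l, f, ts, ih with
    | 0, f, ts, ih =>
      refine Or.inl ⟨0, fun env => ?_⟩
      rw [Term.realize_func, ldlt_funMap0]
    | 1, f, ts, ih =>
      rcases ih 0 with ⟨c, hc⟩ | ⟨i, c, hc⟩
      · refine Or.inl ⟨c + 1, fun env => ?_⟩
        rw [Term.realize_func, ldlt_funMap1, hc]
      · refine Or.inr ⟨i, c + 1, fun env => ?_⟩
        rw [Term.realize_func, ldlt_funMap1, hc]
        ring
    | (l + 2), f, ts, ih => exact f.elim

/-- Quantifier-free `Ldlt`-formulas are invariant under `SameClamp` for large enough `M`. -/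
lemma qf_invariant {φ : Ldlt.BoundedFormula (Fin n) 0} (hqf : φ.IsQF) :
    ∃ M : ℕ, ∀ v w : Fin n → ℕ, SameClamp δ M v w →
      ∀ xs : Fin 0 → ℕ,
      ((letI := LdltStruct δ; φ.Realize v xs) ↔ (letI := LdltStruct δ; φ.Realize w xs)) := by
  letI := LdltStruct δ
  induction hqf with
  | falsum => exact ⟨0, fun v w _ xs => Iff.rfl⟩
  | of_isAtomic h =>
    induction h with
    | equal t₁ t₂ =>
      rcases term_normal δ t₁ with ⟨c₁, hc₁⟩ | ⟨i₁, c₁, hc₁⟩ <;>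
        rcases term_normal δ t₂ with ⟨c₂, hc₂⟩ | ⟨i₂, c₂, hc₂⟩
      · exact ⟨0, fun v w _ xs => by
          simp only [BoundedFormula.realize_bdEqual, hc₁, hc₂]⟩
      · refine ⟨c₁ + c₂, fun v w hvw xs => ?_⟩
        simp only [BoundedFormula.realize_bdEqual, hc₁, hc₂, Sum.elim_inl]
        have h2 := hvw.1.2.1 i₂
        omega
      · refine ⟨c₁ + c₂, fun v w hvw xs => ?_⟩
        simp only [BoundedFormula.realize_bdEqual, hc₁, hc₂, Sum.elim_inl]
        have h2 := hvw.1.2.1 i₁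
        omega
      · refine ⟨c₁ + c₂, fun v w hvw xs => ?_⟩
        simp only [BoundedFormula.realize_bdEqual, hc₁, hc₂, Sum.elim_inl]
        have h3 := hvw.1.2.2 i₁ i₂
        have ho := hvw.2 i₁ i₂
        have ho' := hvw.2 i₂ i₁
        omega
    | rel R ts =>
      rename_i l
      match l, R, ts with
      | 1, R, ts =>
        rcases term_normal δ (ts 0) with ⟨c, hc⟩ | ⟨i, c, hc⟩
        · refine ⟨0, fun v w hvw xs => ?_⟩
          simp only [BoundedFormula.realize_rel, ldlt_relMap1, hc]
        · refine ⟨0, fun v w hvw xs => ?_⟩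
          simp only [BoundedFormula.realize_rel, ldlt_relMap1, hc, Sum.elim_inl]
          have h1 := hvw.1.1 i
          rw [Nat.dvd_iff_mod_eq_zero, Nat.dvd_iff_mod_eq_zero, Nat.add_mod, h1,
            ← Nat.add_mod]
      | 2, R, ts =>
        rcases term_normal δ (ts 0) with ⟨c₁, hc₁⟩ | ⟨i₁, c₁, hc₁⟩ <;>
          rcases term_normal δ (ts 1) with ⟨c₂, hc₂⟩ | ⟨i₂, c₂, hc₂⟩
        · refine ⟨0, fun v w hvw xs => ?_⟩
          simp only [BoundedFormula.realize_rel, ldlt_relMap2, hc₁, hc₂]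
        · refine ⟨c₁ + c₂, fun v w hvw xs => ?_⟩
          simp only [BoundedFormula.realize_rel, ldlt_relMap2, hc₁, hc₂, Sum.elim_inl]
          have h2 := hvw.1.2.1 i₂
          omega
        · refine ⟨c₁ + c₂, fun v w hvw xs => ?_⟩
          simp only [BoundedFormula.realize_rel, ldlt_relMap2, hc₁, hc₂, Sum.elim_inl]
          have h2 := hvw.1.2.1 i₁
          omega
        · refine ⟨c₁ + c₂, fun v w hvw xs => ?_⟩
          simp only [BoundedFormula.realize_rel, ldlt_relMap2, hc₁, hc₂, Sum.elim_inl]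
          have h3 := hvw.1.2.2 i₁ i₂
          have ho := hvw.2 i₁ i₂
          have ho' := hvw.2 i₂ i₁
          omega
  | imp h₁ h₂ ih₁ ih₂ =>
    obtain ⟨M₁, hM₁⟩ := ih₁
    obtain ⟨M₂, hM₂⟩ := ih₂
    refine ⟨max M₁ M₂, fun v w hvw xs => ?_⟩
    rw [BoundedFormula.realize_imp, BoundedFormula.realize_imp,
      hM₁ v w (hvw.mono (le_max_left _ _)) xs, hM₂ v w (hvw.mono (le_max_right _ _)) xs]

end Inv


/-! ### The one-block move lemma, via stability -/

section Key4

variable {δ M : ℕ}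

lemma key4 (hδ : 1 ≤ δ) (Φ : (Fin n → ℕ) → Prop)
    (hInv : ∀ v w : Fin n → ℕ, SameClamp δ M v w → (Φ v ↔ Φ w))
    (I : Finset (Fin n))
    (hstI : StableRel fun (a : {i : Fin n // i ∈ I} → ℕ) (b : {i : Fin n // i ∉ I} → ℕ) =>
      Φ fun i => if h : i ∈ I then a ⟨i, h⟩ else b ⟨i, h⟩)
    (v : Fin n → ℕ) (T : ℕ) (hT : δ ∣ T)
    (hbig : ∀ i ∈ I, M < v i)
    (hsplit : ∀ j, j ∉ I → (∀ i ∈ I, v i + M < v j) ∨ (∀ i ∈ I, v j + M < v i))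
    (htar : ∀ i ∈ I, ∀ j, j ∉ I → v j + M < v i + T) :
    Φ v ↔ Φ (fun i => if i ∈ I then v i + T else v i) := by
  classical
  obtain ⟨v', hv'⟩ : ∃ v' : Fin n → ℕ, ∀ i, v' i = if i ∈ I then v i + T else v i :=
    ⟨_, fun _ => rfl⟩
  have hgoal : (fun i => if i ∈ I then v i + T else v i) = v' := by
    funext i; rw [hv']
  rw [hgoal]
  rcases I.eq_empty_or_nonempty with hI | hI
  · have : v' = v := by
      funext i
      rw [hv', if_neg (by simp [hI])]
    rw [this]
  obtain ⟨i₀, hi₀⟩ := hI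
  by_contra hne
  set U : Fin n → Prop := fun j => j ∉ I ∧ ∀ i ∈ I, v i + M < v j with hUdef
  set maxv : ℕ := Finset.univ.sup v with hmaxv
  have hmax : ∀ i, v i ≤ maxv := fun i => Finset.le_sup (Finset.mem_univ i)
  obtain ⟨H, hHdvd, hHbig⟩ : ∃ H : ℕ, δ ∣ H ∧ maxv + T + M + 1 ≤ H := by
    refine ⟨δ * (maxv + T + M + 1), Dvd.intro _ rfl, ?_⟩
    calc maxv + T + M + 1 = 1 * (maxv + T + M + 1) := by ring
    _ ≤ δ * (maxv + T + M + 1) := Nat.mul_le_mul_right _ hδ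
  obtain ⟨Cfg, hCfg⟩ : ∃ Cfg : ℕ → ℕ → (Fin n → ℕ), ∀ a b i,
      Cfg a b i = if i ∈ I then v i + a * H else if U i then v i + b * H else v i :=
    ⟨_, fun _ _ _ => rfl⟩
  -- the complement splits
  have hLow : ∀ j, j ∉ I → ¬ U j → ∀ i ∈ I, v j + M < v i := by
    intro j hj hUj i hi
    rcases hsplit j hj with h | h
    · exact absurd ⟨hj, h⟩ hUj
    · exact h i hi
  have hUbig : ∀ j, U j → M < v j := by
    intro j hj
    have := hj.2 i₀ hi₀
    omega
  have hv'I : ∀ i ∈ I, v' i = v i + T := fun i hi => by rw [hv', if_pos hi]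
  have hv'N : ∀ i, i ∉ I → v' i = v i := fun i hi => by rw [hv', if_neg hi]
  -- moving the block and the upper part by admissible amounts
  have lemA : ∀ a b : ℕ, 1 ≤ a → a < b → (Φ (Cfg a b) ↔ Φ v) := by
    intro a b ha hab
    have hab' : a * H + H ≤ b * H := by
      calc a * H + H = (a + 1) * H := by ring
      _ ≤ b * H := Nat.mul_le_mul_right _ hab
    have haH : H ≤ a * H := by
      calc H = 1 * H := (one_mul H).symm
      _ ≤ a * H := Nat.mul_le_mul_right _ ha
    refine (hInv v (Cfg a b) ?_).symm
    refine sameClamp_shift v (fun i => if i ∈ I then a * H else if U i then b * H else 0)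
      ?_ ?_ ?_ ?_ (Cfg a b) ?_
    · intro i
      split_ifs
      · exact Dvd.dvd.mul_left hHdvd a
      · exact Dvd.dvd.mul_left hHdvd b
      · exact dvd_zero δ
    · intro i hg
      split_ifs at hg with h1 h2
      · exact hbig i h1
      · exact hUbig i h2
      · exact absurd rfl hg
    · intro i j hle hnear
      by_cases hiI : i ∈ I <;> by_cases hjI : j ∈ I
      · rw [if_pos hiI, if_pos hjI]
      · exfalso
        rcases hsplit j hjI with h | h
        · have := h i hiI; omega
        · have := h i hiI; omega
      · exfalso
        rcases hsplit i hiI with h | h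
        · have := h j hjI; omega
        · have := h j hjI; omega
      · rw [if_neg hiI, if_neg hjI]
        by_cases hUi : U i <;> by_cases hUj : U j
        · rw [if_pos hUi, if_pos hUj]
        · exfalso
          have h1 := hUi.2 i₀ hi₀
          have h2 := hLow j hjI hUj i₀ hi₀
          omega
        · exfalso
          have h1 := hUj.2 i₀ hi₀
          have h2 := hLow i hiI hUi i₀ hi₀
          omega
        · rw [if_neg hUi, if_neg hUj]
    · intro i j hle hfar
      by_cases hiI : i ∈ I <;> by_cases hjI : j ∈ I
      · rw [if_pos hiI, if_pos hjI]
        omega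
      · rw [if_pos hiI, if_neg hjI]
        by_cases hUj : U j
        · exfalso
          have := hUj.2 i hiI
          omega
        · rw [if_neg hUj]
          omega
      · rw [if_neg hiI, if_pos hjI]
        by_cases hUi : U i
        · rw [if_pos hUi]
          have hj' := hmax j
          omega
        · exfalso
          have := hLow i hiI hUi j hjI
          omega
      · rw [if_neg hiI, if_neg hjI]
        by_cases hUi : U i <;> by_cases hUj : U j
        · rw [if_pos hUi, if_pos hUj]
          omega
        · rw [if_pos hUi, if_neg hUj]
          omega
        · exfalso
          have h1 := hUj.2 i₀ hi₀
          have h2 := hLow i hiI hUi i₀ hi₀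
          omega
        · rw [if_neg hUi, if_neg hUj]
          omega
    · intro i
      rw [hCfg]
      by_cases hiI : i ∈ I
      · rw [if_pos hiI, if_pos hiI]
      · rw [if_neg hiI, if_neg hiI]
        by_cases hUi : U i
        · rw [if_pos hUi, if_pos hUi]
        · rw [if_neg hUi, if_neg hUi]
          omega
  have lemB : ∀ a b : ℕ, 1 ≤ b → b < a → (Φ (Cfg a b) ↔ Φ v') := by
    intro a b hb hba
    have ha1 : 1 ≤ a := by omega
    have haH : H ≤ a * H := by
      calc H = 1 * H := (one_mul H).symm
      _ ≤ a * H := Nat.mul_le_mul_right _ ha1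
    have haHT : T ≤ a * H := by omega
    have hba' : b * H + H ≤ a * H := by
      calc b * H + H = (b + 1) * H := by ring
      _ ≤ a * H := Nat.mul_le_mul_right _ hba
    refine (hInv v' (Cfg a b) ?_).symm
    refine sameClamp_shift v' (fun i => if i ∈ I then a * H - T else if U i then b * H else 0)
      ?_ ?_ ?_ ?_ (Cfg a b) ?_
    · intro i
      split_ifs
      · exact Nat.dvd_sub (Dvd.dvd.mul_left hHdvd a) hT
      · exact Dvd.dvd.mul_left hHdvd b
      · exact dvd_zero δ
    · intro i hg
      split_ifs at hg with h1 h2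
      · have := hbig i h1
        rw [hv'I i h1]
        omega
      · have := hUbig i h2
        rw [hv'N i h2.1]
        omega
      · exact absurd rfl hg
    · intro i j hle hnear
      by_cases hiI : i ∈ I <;> by_cases hjI : j ∈ I
      · rw [if_pos hiI, if_pos hjI]
      · exfalso
        have := htar i hiI j hjI
        rw [hv'I i hiI, hv'N j hjI] at hle hnear
        omega
      · exfalso
        have := htar j hjI i hiI
        rw [hv'N i hiI, hv'I j hjI] at hle hnear
        omega
      · rw [if_neg hiI, if_neg hjI]
        rw [hv'N i hiI, hv'N j hjI] at hle hnear
        by_cases hUi : U i <;> by_cases hUj : U j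
        · rw [if_pos hUi, if_pos hUj]
        · exfalso
          have h1 := hUi.2 i₀ hi₀
          have h2 := hLow j hjI hUj i₀ hi₀
          omega
        · exfalso
          have h1 := hUj.2 i₀ hi₀
          have h2 := hLow i hiI hUi i₀ hi₀
          omega
        · rw [if_neg hUi, if_neg hUj]
    · intro i j hle hfar
      by_cases hiI : i ∈ I <;> by_cases hjI : j ∈ I
      · rw [if_pos hiI, if_pos hjI]
        rw [hv'I i hiI, hv'I j hjI] at hle hfar ⊢
        omega
      · rw [if_pos hiI, if_neg hjI]
        rw [hv'I i hiI, hv'N j hjI] at hle hfar ⊢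
        by_cases hUj : U j
        · rw [if_pos hUj]
          have hj' := hmax j
          omega
        · rw [if_neg hUj]
          omega
      · exfalso
        have := htar j hjI i hiI
        rw [hv'N i hiI, hv'I j hjI] at hle hfar
        omega
      · rw [if_neg hiI, if_neg hjI]
        rw [hv'N i hiI, hv'N j hjI] at hle hfar ⊢
        by_cases hUi : U i <;> by_cases hUj : U j
        · rw [if_pos hUi, if_pos hUj]
          omega
        · rw [if_pos hUi, if_neg hUj]
          omega
        · exfalso
          have h1 := hUj.2 i₀ hi₀
          have h2 := hLow i hiI hUi i₀ hi₀
          omega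
        · rw [if_neg hUi, if_neg hUj]
          omega
    · intro i
      rw [hCfg]
      by_cases hiI : i ∈ I
      · rw [if_pos hiI, if_pos hiI, hv'I i hiI]
        omega
      · rw [if_neg hiI, if_neg hiI, hv'N i hiI]
        by_cases hUi : U i
        · rw [if_pos hUi, if_pos hUi]
        · rw [if_neg hUi, if_neg hUi]
          omega
  -- build a ladder
  obtain ⟨N, hN⟩ := hstI
  apply hN
  have hcases : (Φ v ∧ ¬ Φ v') ∨ (¬ Φ v ∧ Φ v') := by tauto
  rcases hcases with ⟨h1, h2⟩ | ⟨h1, h2⟩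
  · obtain ⟨A, hA⟩ : ∃ A : Fin (N + 1) → ({i : Fin n // i ∈ I} → ℕ), ∀ k i,
        A k i = v i.val + (2 * k.val + 1) * H := ⟨_, fun _ _ => rfl⟩
    obtain ⟨B, hB⟩ : ∃ B : Fin (N + 1) → ({i : Fin n // i ∉ I} → ℕ), ∀ l j,
        B l j = if U j.val then v j.val + (2 * l.val + 2) * H else v j.val :=
      ⟨_, fun _ _ => rfl⟩
    refine ⟨A, B, fun k l => ?_⟩
    have hfe : (fun i => if h : i ∈ I then A k ⟨i, h⟩ else B l ⟨i, h⟩)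
        = Cfg (2 * k.val + 1) (2 * l.val + 2) := by
      funext i
      by_cases h : i ∈ I
      · rw [dif_pos h, hA, hCfg, if_pos h]
      · rw [dif_neg h, hB, hCfg, if_neg h]
    show Φ (fun i => if h : i ∈ I then A k ⟨i, h⟩ else B l ⟨i, h⟩) ↔ k ≤ l
    rw [hfe]
    rcases le_or_gt k.val l.val with hkl | hkl
    · rw [lemA (2 * k.val + 1) (2 * l.val + 2) (by omega) (by omega)]
      exact iff_of_true h1 hkl
    · rw [lemB (2 * k.val + 1) (2 * l.val + 2) (by omega) (by omega)]
      exact iff_of_false h2 (by rw [Fin.le_def]; omega)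
  · obtain ⟨A, hA⟩ : ∃ A : Fin (N + 1) → ({i : Fin n // i ∈ I} → ℕ), ∀ k i,
        A k i = v i.val + (2 * (N - k.val) + 3) * H := ⟨_, fun _ _ => rfl⟩
    obtain ⟨B, hB⟩ : ∃ B : Fin (N + 1) → ({i : Fin n // i ∉ I} → ℕ), ∀ l j,
        B l j = if U j.val then v j.val + (2 * (N - l.val) + 2) * H else v j.val :=
      ⟨_, fun _ _ => rfl⟩
    refine ⟨A, B, fun k l => ?_⟩
    have hfe : (fun i => if h : i ∈ I then A k ⟨i, h⟩ else B l ⟨i, h⟩)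
        = Cfg (2 * (N - k.val) + 3) (2 * (N - l.val) + 2) := by
      funext i
      by_cases h : i ∈ I
      · rw [dif_pos h, hA, hCfg, if_pos h]
      · rw [dif_neg h, hB, hCfg, if_neg h]
    show Φ (fun i => if h : i ∈ I then A k ⟨i, h⟩ else B l ⟨i, h⟩) ↔ k ≤ l
    rw [hfe]
    have hk := k.isLt
    have hl := l.isLt
    rcases le_or_gt k.val l.val with hkl | hkl
    · rw [lemB (2 * (N - k.val) + 3) (2 * (N - l.val) + 2) (by omega) (by omega)]
      exact iff_of_true h2 hkl
    · rw [lemA (2 * (N - k.val) + 3) (2 * (N - l.val) + 2) (by omega) (by omega)]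
      exact iff_of_false h1 (by rw [Fin.le_def]; omega)

end Key4


/-! ### Blocks and the main reduction -/

section Outer

variable {δ M : ℕ}

/-- Near relation. -/
def nrel (M : ℕ) (v : Fin n → ℕ) (i j : Fin n) : Prop := ((v i : ℤ) - v j).natAbs ≤ M

/-- Block relation: equivalence closure of the near relation. -/
def Blk (M : ℕ) (v : Fin n → ℕ) : Fin n → Fin n → Prop := Relation.EqvGen (nrel M v)

lemma blk_refl (v : Fin n → ℕ) (i : Fin n) : Blk M v i i := Relation.EqvGen.refl i

lemma blk_symm {v : Fin n → ℕ} {i j : Fin n} (h : Blk M v i j) : Blk M v j i :=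
  Relation.EqvGen.symm _ _ h

lemma blk_trans {v : Fin n → ℕ} {i j k : Fin n} (h1 : Blk M v i j) (h2 : Blk M v j k) :
    Blk M v i k := Relation.EqvGen.trans _ _ _ h1 h2

lemma blk_congr {v w : Fin n → ℕ} (hd : Data δ M v w) {i j : Fin n} (h : Blk M v i j) :
    Blk M w i j := by
  refine Relation.EqvGen.mono ?_ _ _ h
  intro a b hab
  have := hd.2.2 a b (Or.inl hab)
  unfold nrel at hab ⊢
  omega

lemma blk_diff {v w : Fin n → ℕ} (hd : Data δ M v w) {i j : Fin n} (h : Blk M v i j) :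
    (v i : ℤ) - v j = (w i : ℤ) - w j := by
  induction h with
  | rel a b hab => exact hd.2.2 a b (Or.inl hab)
  | refl a => ring
  | symm a b _ ih => omega
  | trans a b c _ _ ih1 ih2 => omega

/-- Discrete intermediate value property along a block. -/
lemma blk_ivt {v : Fin n → ℕ} {i j : Fin n} (h : Blk M v i j) :
    ∀ x : ℕ, min (v i) (v j) ≤ x → x ≤ max (v i) (v j) →
      ∃ t, Blk M v i t ∧ x ≤ v t + M ∧ v t ≤ x + M := by
  induction h with
  | rel a b hab =>
    intro x hx1 hx2
    unfold nrel at hab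
    refine ⟨a, blk_refl v a, ?_, ?_⟩ <;> omega
  | refl a =>
    intro x hx1 hx2
    refine ⟨a, blk_refl v a, ?_, ?_⟩ <;> omega
  | symm a b hab ih =>
    intro x hx1 hx2
    obtain ⟨t, ht, h1, h2⟩ := ih x (by omega) (by omega)
    exact ⟨t, blk_trans (blk_symm (Relation.EqvGen.mono (fun _ _ h => h) _ _ hab)) ht, h1, h2⟩
  | trans a b c hab hbc ih1 ih2 =>
    intro x hx1 hx2
    by_cases hb : min (v a) (v b) ≤ x ∧ x ≤ max (v a) (v b)
    · exact ih1 x hb.1 hb.2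
    · obtain ⟨t, ht, h1, h2⟩ := ih2 x (by omega) (by omega)
      exact ⟨t, blk_trans (Relation.EqvGen.mono (fun _ _ h => h) _ _ hab) ht, h1, h2⟩

open Classical in
/-- Least element of the block of `i`. -/
noncomputable def repOf (M : ℕ) (v : Fin n → ℕ) (i : Fin n) : Fin n :=
  (Finset.univ.filter (fun j => Blk M v i j)).min'
    ⟨i, by simp [blk_refl]⟩

/-- The block of `i` is unbounded ("non-grounded"): all its values exceed `M`. -/
def ngb (M : ℕ) (v : Fin n → ℕ) (i : Fin n) : Prop := ∀ j, Blk M v i j → M < v j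

open Classical in
/-- The sorted list of representatives of non-grounded blocks. -/
noncomputable def repsL (M : ℕ) (v : Fin n → ℕ) : List (Fin n) :=
  (Finset.univ.filter (fun i => ngb M v i ∧ repOf M v i = i)).sort (· ≤ ·)

noncomputable def rankOf (M : ℕ) (v : Fin n → ℕ) (i : Fin n) : ℕ :=
  (repsL M v).idxOf (repOf M v i)

/-- The final, canonical configuration. -/
noncomputable def Ffin (δ M : ℕ) (v : Fin n → ℕ) (A : ℕ) (i : Fin n) : ℕ :=
  if ngb M v i then
    (A * (rankOf M v i + 1) + v (repOf M v i) % δ + v i) - v (repOf M v i)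
  else v i

lemma blk_rep {v : Fin n → ℕ} (i : Fin n) : Blk M v i (repOf M v i) := by
  unfold repOf
  generalize_proofs hne
  have h := Finset.min'_mem _ hne
  simp only [Finset.mem_filter] at h
  exact h.2

lemma rep_le {v : Fin n → ℕ} {i j : Fin n} (h : Blk M v i j) : repOf M v i ≤ j := by
  unfold repOf
  generalize_proofs hne
  exact Finset.min'_le _ _ (by simp [h])

lemma rep_eq {v : Fin n → ℕ} {i j : Fin n} (h : Blk M v i j) :
    repOf M v i = repOf M v j :=
  le_antisymm (rep_le (blk_trans h (blk_rep j)))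
    (rep_le (blk_trans (blk_symm h) (blk_rep i)))

lemma ngb_congr {v : Fin n → ℕ} {i j : Fin n} (h : Blk M v i j) :
    ngb M v i ↔ ngb M v j :=
  ⟨fun hn k hk => hn k (blk_trans h hk), fun hn k hk => hn k (blk_trans (blk_symm h) hk)⟩

lemma rep_idem {v : Fin n → ℕ} (i : Fin n) :
    repOf M v (repOf M v i) = repOf M v i := (rep_eq (blk_rep i)).symm

lemma rep_mem_repsL {v : Fin n → ℕ} {i : Fin n} (h : ngb M v i) :
    repOf M v i ∈ repsL M v := by
  classical
  unfold repsL
  rw [Finset.mem_sort]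
  simp only [Finset.mem_filter, Finset.mem_univ, true_and]
  exact ⟨(ngb_congr (blk_rep i)).mp h, rep_idem i⟩

lemma rank_lt_len {v : Fin n → ℕ} {i : Fin n} (h : ngb M v i) :
    rankOf M v i < (repsL M v).length :=
  List.idxOf_lt_length_iff.mpr (rep_mem_repsL h)


lemma moveAll (hδ : 1 ≤ δ) (Φ : (Fin n → ℕ) → Prop)
    (hInv : ∀ v w : Fin n → ℕ, SameClamp δ M v w → (Φ v ↔ Φ w))
    (hst : ∀ I : Finset (Fin n),
      StableRel fun (a : {i : Fin n // i ∈ I} → ℕ) (b : {i : Fin n // i ∉ I} → ℕ) =>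
        Φ fun i => if h : i ∈ I then a ⟨i, h⟩ else b ⟨i, h⟩)
    (u : Fin n → ℕ) (A : ℕ) (hAd : δ ∣ A)
    (hA : 2 * Finset.univ.sup u + M + δ + 1 ≤ A) :
    Φ u ↔ Φ (Ffin δ M u A) := by
  classical
  set maxu : ℕ := Finset.univ.sup u with hmaxu
  have hmax : ∀ i, u i ≤ maxu := fun i => Finset.le_sup (Finset.mem_univ i)
  have hAm : ∀ t : ℕ, A ≤ A * (t + 1) := fun t => Nat.le_mul_of_pos_right A (by omega)
  have hmod : ∀ i : Fin n, u i % δ < δ := fun i => Nat.mod_lt _ (by omega)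
  -- value of the final configuration on non-grounded blocks
  have hFeq : ∀ i, ngb M u i →
      Ffin δ M u A i + u (repOf M u i)
        = A * (rankOf M u i + 1) + u (repOf M u i) % δ + u i := by
    intro i hng
    unfold Ffin
    rw [if_pos hng]
    have h1 := hAm (rankOf M u i)
    have h2 := hmax (repOf M u i)
    omega
  obtain ⟨Cs, hCs⟩ : ∃ Cs : ℕ → Fin n → ℕ, ∀ s i,
      Cs s i = if ngb M u i ∧ rankOf M u i < s then Ffin δ M u A i else u i :=
    ⟨_, fun _ _ => rfl⟩
  have hmain : ∀ s, Φ u ↔ Φ (Cs s) := by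
    intro s
    induction s with
    | zero =>
      have : Cs 0 = u := funext fun i => by
        rw [hCs]
        exact if_neg (by rintro ⟨-, h⟩; omega)
      rw [this]
    | succ s ih =>
      rcases le_or_gt (repsL M u).length s with hs | hs
      · have : Cs (s + 1) = Cs s := funext fun i => by
          rw [hCs, hCs]
          by_cases hng : ngb M u i
          · have := rank_lt_len (M := M) hng
            rw [if_pos ⟨hng, by omega⟩, if_pos ⟨hng, by omega⟩]
          · rw [if_neg (by tauto), if_neg (by tauto)]
        rw [this]
        exact ih
      · -- move the block whose representative has rank `s`
        set r : Fin n := (repsL M u).get ⟨s, hs⟩ with hrdef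
        have hrmem : r ∈ repsL M u := List.get_mem _ _
        have hrprop : ngb M u r ∧ repOf M u r = r := by
          have h := (Finset.mem_sort (α := Fin n) (· ≤ ·)).mp hrmem
          simpa using h
        have hnd : (repsL M u).Nodup := Finset.sort_nodup _ _
        have hridx : (repsL M u).idxOf r = s := by
          have h1 : (repsL M u).idxOf r < (repsL M u).length :=
            List.idxOf_lt_length_iff.mpr hrmem
          have h2 : (repsL M u).get ⟨(repsL M u).idxOf r, h1⟩ = (repsL M u).get ⟨s, hs⟩ :=
            (List.idxOf_get h1).trans hrdef
          have h3 := (List.Nodup.get_inj_iff hnd).mp h2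
          exact congrArg Fin.val h3
        have hrankr : rankOf M u r = s := by
          unfold rankOf
          rw [hrprop.2, hridx]
        set I : Finset (Fin n) :=
          Finset.univ.filter (fun i => ngb M u i ∧ rankOf M u i = s) with hIdef
        have hmemI : ∀ i, i ∈ I ↔ (ngb M u i ∧ rankOf M u i = s) := by
          intro i
          simp [hIdef]
        have hrepI : ∀ i ∈ I, repOf M u i = r := by
          intro i hi
          rw [hmemI] at hi
          have h1 : (repsL M u).idxOf (repOf M u i) = s := hi.2
          have hlt : (repsL M u).idxOf (repOf M u i) < (repsL M u).length :=
            List.idxOf_lt_length_iff.mpr (rep_mem_repsL hi.1)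
          have h2 := List.idxOf_get hlt
          rw [← h2, hrdef]
          congr 1
          exact Fin.ext h1
        have hImem' : ∀ i, ngb M u i → repOf M u i = r → i ∈ I := by
          intro i h1 h2
          rw [hmemI]
          refine ⟨h1, ?_⟩
          unfold rankOf
          rw [h2, hridx]
        have hblkI : ∀ i ∈ I, Blk M u i r := by
          intro i hi
          have := blk_rep (M := M) (v := u) i
          rwa [hrepI i hi] at this
        have hnotblk : ∀ j, j ∉ I → ∀ i ∈ I, ¬ Blk M u j i := by
          intro j hj i hi hblk
          have h1 : ngb M u j := (ngb_congr (blk_trans hblk (hblkI i hi))).mpr hrprop.1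
          have h2 : repOf M u j = r := by
            rw [rep_eq hblk, hrepI i hi]
          exact hj (hImem' j h1 h2)
        have hfar : ∀ j, j ∉ I → ∀ i ∈ I, M < ((u j : ℤ) - u i).natAbs := by
          intro j hj i hi
          by_contra hc
          exact hnotblk j hj i hi (Relation.EqvGen.rel _ _ (by unfold nrel; omega))
        set T : ℕ := Ffin δ M u A r - u r with hTdef
        have hFr : Ffin δ M u A r = A * (s + 1) + u r % δ := by
          have := hFeq r hrprop.1
          rw [hrankr, hrprop.2] at this
          omega
        have hTval : u r + T = A * (s + 1) + u r % δ := by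
          have h1 := hAm s
          have h2 := hmax r
          omega
        have hTd : δ ∣ T := by
          have hdm := Nat.div_add_mod (u r) δ
          have h1 := hAm s
          have h2 := hmax r
          have hTeq : T = A * (s + 1) - δ * (u r / δ) := by omega
          rw [hTeq]
          exact Nat.dvd_sub (Dvd.dvd.mul_right hAd _) (Dvd.intro _ rfl)
        -- `u i + T` is exactly the final position of `i ∈ I`
        have hiT : ∀ i ∈ I, u i + T = Ffin δ M u A i := by
          intro i hi
          have h1 := hFeq i ((hmemI i).mp hi).1
          rw [hrepI i hi] at h1
          have h2 : rankOf M u i = s := ((hmemI i).mp hi).2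
          rw [h2] at h1
          have h3 := hmax r
          omega
        have hCsI : ∀ i ∈ I, Cs s i = u i := by
          intro i hi
          rw [hCs]
          refine if_neg ?_
          rintro ⟨-, hlt⟩
          have := ((hmemI i).mp hi).2
          omega
        have hFlb : ∀ j, ngb M u j → A * (rankOf M u j + 1) ≤ Ffin δ M u A j + maxu := by
          intro j hng
          have := hFeq j hng
          have := hmax (repOf M u j)
          omega
        have hFub : ∀ j, ngb M u j → Ffin δ M u A j ≤ A * (rankOf M u j + 1) + δ + maxu := by
          intro j hng
          have := hFeq j hng
          have := hmod (repOf M u j)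
          have := hmax j
          omega
        have hbig : ∀ i ∈ I, M < Cs s i := by
          intro i hi
          rw [hCsI i hi]
          exact ((hmemI i).mp hi).1 i (blk_refl u i)
        have hsplit : ∀ j, j ∉ I →
            (∀ i ∈ I, Cs s i + M < Cs s j) ∨ (∀ i ∈ I, Cs s j + M < Cs s i) := by
          intro j hj
          by_cases hmoved : ngb M u j ∧ rankOf M u j < s
          · left
            intro i hi
            rw [hCsI i hi, hCs, if_pos hmoved]
            have h1 := hFlb j hmoved.1
            have h2 := hAm (rankOf M u j)
            have h3 := hmax i
            omega
          · have hCsj : Cs s j = u j := by rw [hCs, if_neg hmoved]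
            by_contra hnot
            push_neg at hnot
            obtain ⟨⟨i1, hi1, hle1⟩, i2, hi2, hle2⟩ := hnot
            rw [hCsj, hCsI i1 hi1] at hle1
            rw [hCsj, hCsI i2 hi2] at hle2
            have hf1 := hfar j hj i1 hi1
            have hf2 := hfar j hj i2 hi2
            have hgt1 : u j + M < u i1 := by omega
            have hlt2 : u i2 + M < u j := by omega
            have hblk21 : Blk M u i2 i1 :=
              blk_trans (hblkI i2 hi2) (blk_symm (hblkI i1 hi1))
            obtain ⟨t, ht, ht1, ht2⟩ := blk_ivt hblk21 (u j) (by omega) (by omega)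
            have : Blk M u j i2 :=
              blk_trans (Relation.EqvGen.rel _ _ (by unfold nrel; omega)) (blk_symm ht)
            exact hnotblk j hj i2 hi2 this
        have htar : ∀ i ∈ I, ∀ j, j ∉ I → Cs s j + M < Cs s i + T := by
          intro i hi j hj
          rw [hCsI i hi] at *
          have hiTv := hiT i hi
          have hFi : A * (s + 1) ≤ u i + T + maxu := by
            have h1 := hFlb i ((hmemI i).mp hi).1
            rw [((hmemI i).mp hi).2] at h1
            omega
          by_cases hmoved : ngb M u j ∧ rankOf M u j < s
          · rw [hCs, if_pos hmoved]
            have h1 := hFub j hmoved.1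
            have h2 : A * (rankOf M u j + 1) ≤ A * s :=
              Nat.mul_le_mul_left A (by omega)
            have h3 : A * (s + 1) = A * s + A := by ring
            omega
          · rw [hCs, if_neg hmoved]
            have h2 := hmax j
            have h1 := hAm s
            omega
        have hk4 := key4 hδ Φ hInv I (hst I) (Cs s) T hTd hbig hsplit htar
        have hfe : (fun i => if i ∈ I then Cs s i + T else Cs s i) = Cs (s + 1) := by
          funext i
          by_cases hiI : i ∈ I
          · rw [if_pos hiI, hCsI i hiI, hCs,
              if_pos ⟨((hmemI i).mp hiI).1, by rw [((hmemI i).mp hiI).2]; omega⟩]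
            exact hiT i hiI
          · rw [if_neg hiI, hCs, hCs]
            by_cases hmoved : ngb M u i ∧ rankOf M u i < s
            · rw [if_pos hmoved, if_pos ⟨hmoved.1, by omega⟩]
            · rw [if_neg hmoved, if_neg ?_]
              rintro ⟨h1, h2⟩
              have : rankOf M u i = s := by
                by_contra hne
                exact hmoved ⟨h1, by omega⟩
              exact hiI (hImem' i h1 (by
                have hlt : (repsL M u).idxOf (repOf M u i) < (repsL M u).length :=
                  List.idxOf_lt_length_iff.mpr (rep_mem_repsL h1)
                have h2' := List.idxOf_get hlt
                rw [← h2', hrdef]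
                congr 1
                exact Fin.ext this))
        rw [hfe] at hk4
        exact ih.trans hk4
  have hfin : Cs (repsL M u).length = Ffin δ M u A := by
    funext i
    rw [hCs]
    by_cases hng : ngb M u i
    · rw [if_pos ⟨hng, rank_lt_len hng⟩]
    · rw [if_neg (by tauto)]
      unfold Ffin
      rw [if_neg hng]
  rw [← hfin]
  exact hmain _


lemma keyLemma (hδ : 1 ≤ δ) (Φ : (Fin n → ℕ) → Prop)
    (hInv : ∀ v w : Fin n → ℕ, SameClamp δ M v w → (Φ v ↔ Φ w))
    (hst : ∀ I : Finset (Fin n),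
      StableRel fun (a : {i : Fin n // i ∈ I} → ℕ) (b : {i : Fin n // i ∉ I} → ℕ) =>
        Φ fun i => if h : i ∈ I then a ⟨i, h⟩ else b ⟨i, h⟩)
    (v w : Fin n → ℕ) (hd : Data δ M v w) : Φ v ↔ Φ w := by
  classical
  obtain ⟨A, hAd, hA1, hA2⟩ : ∃ A : ℕ, δ ∣ A ∧
      2 * Finset.univ.sup v + M + δ + 1 ≤ A ∧ 2 * Finset.univ.sup w + M + δ + 1 ≤ A := by
    refine ⟨δ * (2 * (Finset.univ.sup v + Finset.univ.sup w) + M + δ + 1),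
      Dvd.intro _ rfl, ?_, ?_⟩ <;>
    · have : 2 * (Finset.univ.sup v + Finset.univ.sup w) + M + δ + 1
          ≤ δ * (2 * (Finset.univ.sup v + Finset.univ.sup w) + M + δ + 1) := by
        calc _ = 1 * (2 * (Finset.univ.sup v + Finset.univ.sup w) + M + δ + 1) := by ring
        _ ≤ _ := Nat.mul_le_mul_right _ hδ
      omega
  rw [moveAll hδ Φ hInv hst v A hAd hA1, moveAll hδ Φ hInv hst w A hAd hA2]
  suffices hFF : Ffin δ M v A = Ffin δ M w A by rw [hFF]
  -- the two canonical configurations agree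
  have hblk : ∀ i j, Blk M v i j ↔ Blk M w i j :=
    fun i j => ⟨blk_congr hd, blk_congr hd.symm⟩
  have hrep : ∀ i, repOf M v i = repOf M w i := by
    intro i
    refine le_antisymm (rep_le ?_) (rep_le ?_)
    · exact (hblk i (repOf M w i)).mpr (blk_rep i)
    · exact (hblk i (repOf M v i)).mp (blk_rep i)
  have hng : ∀ i, ngb M v i ↔ ngb M w i := by
    intro i
    constructor
    · intro h j hj
      have h1 := h j ((hblk i j).mpr hj)
      by_contra hc
      have := hd.2.1 j (Or.inr (by omega))
      omega
    · intro h j hj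
      have h1 := h j ((hblk i j).mp hj)
      by_contra hc
      have := hd.2.1 j (Or.inl (by omega))
      omega
  have hreps : repsL M v = repsL M w := by
    unfold repsL
    congr 1
    ext k
    simp only [Finset.mem_filter, Finset.mem_univ, true_and]
    rw [hng k, hrep k]
  have hrank : ∀ i, rankOf M v i = rankOf M w i := by
    intro i
    unfold rankOf
    rw [hreps, hrep]
  funext i
  by_cases h : ngb M v i
  · have h' : ngb M w i := (hng i).mp h
    unfold Ffin
    rw [if_pos h, if_pos h', hrank i, hrep i]
    have hdiff := blk_diff hd (blk_rep (M := M) (v := v) i)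
    rw [hrep i] at hdiff
    have hmodeq := hd.1 (repOf M w i)
    have hb1 : v (repOf M w i) ≤ A := by
      have : v (repOf M w i) ≤ Finset.univ.sup v := Finset.le_sup (Finset.mem_univ _)
      omega
    have hb2 : w (repOf M w i) ≤ A := by
      have : w (repOf M w i) ≤ Finset.univ.sup w := Finset.le_sup (Finset.mem_univ _)
      omega
    have hAm : A ≤ A * (rankOf M w i + 1) := Nat.le_mul_of_pos_right A (by omega)
    omega
  · have h' : ¬ ngb M w i := fun hc => h ((hng i).mpr hc)
    unfold Ffin
    rw [if_neg h, if_neg h']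
    unfold ngb at h
    push_neg at h
    obtain ⟨j, hj, hjM⟩ := h
    have h1 : v j = w j := hd.2.1 j (Or.inl (by omega))
    have h2 := blk_diff hd hj
    omega

end Outer

/-! ### Building the `L_δ` formula -/

section Psi

variable (δ M : ℕ) {n : ℕ}

lemma ld_funMap0 (f : Ld.Functions 0) (x : Fin 0 → ℕ) :
    (letI := LdStruct δ; Structure.funMap f x) = 0 := rfl

lemma ld_funMap1 (f : Ld.Functions 1) (x : Fin 1 → ℕ) :
    (letI := LdStruct δ; Structure.funMap f x) = x 0 + 1 := rfl

lemma ld_relMap1 (r : Ld.Relations 1) (x : Fin 1 → ℕ) :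
    (letI := LdStruct δ; Structure.RelMap r x) = (δ ∣ x 0) := rfl

/-- The function and relation symbols of `Ld`. -/
def zFun : Ld.Functions 0 := Unit.unit
def sFun : Ld.Functions 1 := Unit.unit
def pRel : Ld.Relations 1 := Unit.unit

/-- The zero term. -/
def zT : Ld.Term (Fin n) := Term.func zFun (fun i => i.elim0)

/-- `k`-fold successor of a term. -/
def sT (k : ℕ) (t : Ld.Term (Fin n)) : Ld.Term (Fin n) :=
  match k with
  | 0 => t
  | k + 1 => Term.func sFun (fun _ => sT k t)

lemma realize_sT (k : ℕ) (t : Ld.Term (Fin n)) (x : Fin n → ℕ) :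
    (letI := LdStruct δ; (sT k t).realize x) = (letI := LdStruct δ; t.realize x) + k := by
  letI := LdStruct δ
  induction k with
  | zero => simp [sT]
  | succ k ih =>
    rw [show sT (k + 1) t = Term.func sFun (fun _ => sT k t) from rfl, Term.realize_func,
      ld_funMap1]
    rw [ih]
    omega

lemma realize_zT (x : Fin n → ℕ) : (letI := LdStruct δ; (zT (n := n)).realize x) = 0 := by
  letI := LdStruct δ
  rw [show (zT (n := n)) = Term.func zFun (fun i => i.elim0) from rfl, Term.realize_func,
    ld_funMap0]

/-- `xᵢ = c`. -/
def eqF (i : Fin n) (c : ℕ) : Ld.Formula (Fin n) := Term.equal (Term.var i) (sT c zT)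

/-- `xᵢ = xⱼ + c`. -/
def dfF (i j : Fin n) (c : ℕ) : Ld.Formula (Fin n) :=
  Term.equal (Term.var i) (sT c (Term.var j))

/-- `δ ∣ xᵢ + m`. -/
def rsF (i : Fin n) (m : ℕ) : Ld.Formula (Fin n) :=
  Relations.formula pRel (fun _ => sT m (Term.var i))

lemma eqF_qf (i : Fin n) (c : ℕ) : (eqF i c).IsQF := by
  unfold eqF Term.equal
  exact (BoundedFormula.IsAtomic.equal _ _).isQF

lemma dfF_qf (i j : Fin n) (c : ℕ) : (dfF i j c).IsQF := by
  unfold dfF Term.equal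
  exact (BoundedFormula.IsAtomic.equal _ _).isQF

lemma rsF_qf (i : Fin n) (m : ℕ) : (rsF i m).IsQF := by
  unfold rsF Relations.formula
  exact (BoundedFormula.IsAtomic.rel _ _).isQF

lemma realize_eqF (i : Fin n) (c : ℕ) (x : Fin n → ℕ) :
    RealizeD δ (eqF i c) x ↔ x i = c := by
  letI := LdStruct δ
  unfold RealizeD eqF
  rw [Formula.realize_equal, realize_sT, realize_zT]
  simp [Term.realize_var]

lemma realize_dfF (i j : Fin n) (c : ℕ) (x : Fin n → ℕ) :
    RealizeD δ (dfF i j c) x ↔ x i = x j + c := by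
  letI := LdStruct δ
  unfold RealizeD dfF
  rw [Formula.realize_equal, realize_sT]
  simp [Term.realize_var]

lemma realize_rsF (i : Fin n) (m : ℕ) (x : Fin n → ℕ) :
    RealizeD δ (rsF i m) x ↔ δ ∣ x i + m := by
  letI := LdStruct δ
  unfold RealizeD rsF
  rw [Formula.realize_rel, ld_relMap1, realize_sT]
  simp [Term.realize_var]

/-- Conjunction of a list of formulas. -/
def andL (l : List (Ld.Formula (Fin n))) : Ld.Formula (Fin n) := l.foldr (· ⊓ ·) ⊤

/-- Disjunction of a list of formulas. -/
def orL (l : List (Ld.Formula (Fin n))) : Ld.Formula (Fin n) := l.foldr (· ⊔ ·) ⊥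

lemma andL_qf (l : List (Ld.Formula (Fin n))) (h : ∀ f ∈ l, f.IsQF) : (andL l).IsQF := by
  induction l with
  | nil => exact BoundedFormula.IsQF.top
  | cons a l ih =>
    exact (h a (by simp)).inf (ih fun f hf => h f (by simp [hf]))

lemma orL_qf (l : List (Ld.Formula (Fin n))) (h : ∀ f ∈ l, f.IsQF) : (orL l).IsQF := by
  induction l with
  | nil => exact BoundedFormula.isQF_bot
  | cons a l ih =>
    exact (h a (by simp)).sup (ih fun f hf => h f (by simp [hf]))

lemma realize_andL (l : List (Ld.Formula (Fin n))) (x : Fin n → ℕ) :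
    RealizeD δ (andL l) x ↔ ∀ f ∈ l, RealizeD δ f x := by
  letI := LdStruct δ
  unfold RealizeD andL
  induction l with
  | nil => simp
  | cons a l ih =>
    simp only [List.foldr_cons, Formula.realize_inf, ih, List.mem_cons]
    constructor
    · rintro ⟨h1, h2⟩ f (rfl | hf)
      · exact h1
      · exact h2 f hf
    · intro h
      exact ⟨h a (Or.inl rfl), fun f hf => h f (Or.inr hf)⟩

lemma realize_orL (l : List (Ld.Formula (Fin n))) (x : Fin n → ℕ) :
    RealizeD δ (orL l) x ↔ ∃ f ∈ l, RealizeD δ f x := by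
  letI := LdStruct δ
  unfold RealizeD orL
  induction l with
  | nil => simp
  | cons a l ih =>
    simp only [List.foldr_cons, Formula.realize_sup, ih, List.mem_cons]
    constructor
    · rintro (h1 | ⟨f, hf, h2⟩)
      · exact ⟨a, Or.inl rfl, h1⟩
      · exact ⟨f, Or.inr hf, h2⟩
    · rintro ⟨f, (rfl | hf), h2⟩
      · exact Or.inl h2
      · exact Or.inr ⟨f, hf, h2⟩

lemma res_iff (hδ : 1 ≤ δ) (a b : ℕ) : δ ∣ a + (δ - b % δ) % δ ↔ a % δ = b % δ := by
  have hb : b % δ < δ := Nat.mod_lt _ (by omega)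
  have ha : a % δ < δ := Nat.mod_lt _ (by omega)
  have hdm := Nat.div_add_mod a δ
  rcases Nat.eq_zero_or_pos (b % δ) with h0 | h0
  · rw [h0, Nat.sub_zero, Nat.mod_self, Nat.add_zero]
    exact Nat.dvd_iff_mod_eq_zero
  · rw [Nat.mod_eq_of_lt (show δ - b % δ < δ by omega)]
    constructor
    · intro h
      have hd2 : δ ∣ a % δ + (δ - b % δ) := by
        have h4 : δ * (a / δ) + (a % δ + (δ - b % δ)) = a + (δ - b % δ) := by omega
        rw [← h4] at h
        exact (Nat.dvd_add_right ⟨a / δ, rfl⟩).mp h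
      obtain ⟨j, hj⟩ := hd2
      have hj1 : j = 1 := by
        rcases j with _ | _ | j
        · omega
        · rfl
        · exfalso
          have : δ * 2 ≤ δ * (j + 1 + 1) := Nat.mul_le_mul_left δ (by omega)
          omega
      rw [hj1] at hj
      omega
    · intro h
      refine ⟨a / δ + 1, ?_⟩
      have : δ * (a / δ + 1) = δ * (a / δ) + δ := by ring
      omega

/-- The fingerprint-equality predicate. -/
def fpEq (u x : Fin n → ℕ) : Prop :=
  (∀ i, x i % δ = u i % δ) ∧
  (∀ i, (u i ≤ M → x i = u i) ∧ (M < u i → M < x i)) ∧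
  (∀ i j, ∀ c ≤ M, (x i = x j + c ↔ u i = u j + c))

/-- The formula carving out the fingerprint class of `u`. -/
def clF (u : Fin n → ℕ) : Ld.Formula (Fin n) := andL (
  ((List.finRange n).map fun i => rsF i ((δ - u i % δ) % δ)) ++
  ((List.finRange n).flatMap fun i =>
     if u i ≤ M then [eqF i (u i)] else (List.range (M + 1)).map fun c => (eqF i c).not) ++
  ((List.finRange n).flatMap fun i => (List.finRange n).flatMap fun j =>
     (List.range (M + 1)).map fun c =>
       if u i = u j + c then dfF i j c else (dfF i j c).not))

lemma clF_qf (u : Fin n → ℕ) : (clF δ M u).IsQF := by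
  refine andL_qf _ ?_
  intro f hf
  simp only [List.mem_append, List.mem_map, List.mem_flatMap, List.mem_finRange,
    List.mem_range, true_and] at hf
  rcases hf with (⟨i, rfl⟩ | ⟨i, hfi⟩) | ⟨i, j, c, hc, rfl⟩
  · exact rsF_qf i _
  · split_ifs at hfi with h
    · simp only [List.mem_singleton] at hfi
      exact hfi ▸ eqF_qf i (u i)
    · simp only [List.mem_map, List.mem_range] at hfi
      obtain ⟨c, -, rfl⟩ := hfi
      exact (eqF_qf i c).not
  · split_ifs
    · exact dfF_qf i j c
    · exact (dfF_qf i j c).not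

lemma realize_not' (f : Ld.Formula (Fin n)) (x : Fin n → ℕ) :
    RealizeD δ f.not x ↔ ¬ RealizeD δ f x := by
  letI := LdStruct δ
  unfold RealizeD
  exact Formula.realize_not

lemma realize_clF (hδ : 1 ≤ δ) (u x : Fin n → ℕ) :
    RealizeD δ (clF δ M u) x ↔ fpEq δ M u x := by
  rw [clF, realize_andL]
  constructor
  · intro h
    refine ⟨fun i => ?_, fun i => ⟨fun hle => ?_, fun hlt => ?_⟩, fun i j c hc => ?_⟩
    · have hm := h (rsF i ((δ - u i % δ) % δ)) (by
        simp only [List.mem_append, List.mem_map, List.mem_finRange]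
        exact Or.inl (Or.inl ⟨i, trivial, rfl⟩))
      rw [realize_rsF] at hm
      exact (res_iff δ hδ (x i) (u i)).mp hm
    · have hm := h (eqF i (u i)) (by
        simp only [List.mem_append, List.mem_flatMap, List.mem_finRange]
        refine Or.inl (Or.inr ⟨i, trivial, ?_⟩)
        rw [if_pos hle]
        simp)
      rwa [realize_eqF] at hm
    · by_contra hxi
      push_neg at hxi
      have hm := h ((eqF i (x i)).not) (by
        simp only [List.mem_append, List.mem_flatMap, List.mem_finRange]
        refine Or.inl (Or.inr ⟨i, trivial, ?_⟩)
        rw [if_neg (by omega)]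
        simp only [List.mem_map, List.mem_range]
        exact ⟨x i, by omega, rfl⟩)
      rw [realize_not', realize_eqF] at hm
      exact hm rfl
    · by_cases hu : u i = u j + c
      · have hm := h (dfF i j c) (by
          simp only [List.mem_append, List.mem_flatMap, List.mem_finRange, List.mem_map,
            List.mem_range]
          exact Or.inr ⟨i, trivial, j, trivial, c, by omega, by rw [if_pos hu]⟩)
        rw [realize_dfF] at hm
        exact iff_of_true hm hu
      · have hm := h ((dfF i j c).not) (by
          simp only [List.mem_append, List.mem_flatMap, List.mem_finRange, List.mem_map,
            List.mem_range]
          exact Or.inr ⟨i, trivial, j, trivial, c, by omega, by rw [if_neg hu]⟩)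
        rw [realize_not', realize_dfF] at hm
        exact iff_of_false hm hu
  · intro hfp f hf
    simp only [List.mem_append, List.mem_map, List.mem_flatMap, List.mem_finRange,
      List.mem_range, true_and] at hf
    rcases hf with (⟨i, rfl⟩ | ⟨i, hfi⟩) | ⟨i, j, c, hcr, rfl⟩
    · rw [realize_rsF]
      exact (res_iff δ hδ (x i) (u i)).mpr (hfp.1 i)
    · split_ifs at hfi with hle
      · simp only [List.mem_singleton] at hfi
        subst hfi
        rw [realize_eqF]
        exact (hfp.2.1 i).1 hle
      · simp only [List.mem_map, List.mem_range] at hfi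
        obtain ⟨c, hcr, rfl⟩ := hfi
        rw [realize_not', realize_eqF]
        have := (hfp.2.1 i).2 (by omega)
        omega
    · have hiff := hfp.2.2 i j c (by omega)
      split_ifs with hu
      · rw [realize_dfF]
        exact hiff.mpr hu
      · rw [realize_not', realize_dfF]
        exact fun hx => hu (hiff.mp hx)

/-- `fpEq` implies `Data`. -/
lemma fpEq_data (u x : Fin n → ℕ) (h : fpEq δ M u x) : Data δ M u x := by
  obtain ⟨h1, h2, h3⟩ := h
  refine ⟨fun i => (h1 i).symm, fun i hi => ?_, fun i j hij => ?_⟩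
  · rcases hi with hi | hi
    · exact ((h2 i).1 hi).symm
    · by_contra hne
      rcases le_or_gt (u i) M with hle | hlt
      · exact hne ((h2 i).1 hle).symm
      · have := (h2 i).2 hlt
        omega
  · rcases hij with hij | hij
    · rcases le_or_gt (u j) (u i) with hle | hlt
      · have hc : u i = u j + (u i - u j) := by omega
        have := (h3 i j (u i - u j) (by omega)).mpr hc
        omega
      · have hc : u j = u i + (u j - u i) := by omega
        have := (h3 j i (u j - u i) (by omega)).mpr hc
        omega
    · rcases le_or_gt (x j) (x i) with hle | hlt
      · have hc : x i = x j + (x i - x j) := by omega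
        have := (h3 i j (x i - x j) (by omega)).mp hc
        omega
      · have hc : x j = x i + (x j - x i) := by omega
        have := (h3 j i (x j - x i) (by omega)).mp hc
        omega

/-- The finite fingerprint encoding. -/
def enc (hδ : 0 < δ) (u : Fin n → ℕ) :
    (Fin n → Fin (M + 2)) × (Fin n → Fin δ) × (Fin n → Fin n → Fin (M + 2)) :=
  (fun i => ⟨min (u i) (M + 1), by omega⟩,
   fun i => ⟨u i % δ, Nat.mod_lt _ hδ⟩,
   fun i j => ⟨if u j ≤ u i ∧ u i - u j ≤ M then u i - u j else M + 1, by split_ifs <;> omega⟩)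

lemma enc_fpEq (hδ : 0 < δ) (u x : Fin n → ℕ) (h : enc δ M hδ u = enc δ M hδ x) :
    fpEq δ M u x := by
  have h1 : ∀ i, min (u i) (M + 1) = min (x i) (M + 1) := fun i =>
    congrArg Fin.val (congrFun (congrArg Prod.fst h) i)
  have h2 : ∀ i, u i % δ = x i % δ := fun i =>
    congrArg Fin.val (congrFun (congrArg (fun p => p.2.1) h) i)
  have h3 : ∀ i j, (if u j ≤ u i ∧ u i - u j ≤ M then u i - u j else M + 1)
      = (if x j ≤ x i ∧ x i - x j ≤ M then x i - x j else M + 1) := fun i j =>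
    congrArg Fin.val (congrFun (congrFun (congrArg (fun p => p.2.2) h) i) j)
  refine ⟨fun i => (h2 i).symm, fun i => ⟨fun hle => ?_, fun hlt => ?_⟩, fun i j c hc => ?_⟩
  · have := h1 i; omega
  · have := h1 i; omega
  · have := h3 i j
    constructor <;> intro hx <;> (split_ifs at this <;> omega)

end Psi

end Stmt4Aux

theorem stmt4 (δ : ℕ) (hδ : 1 ≤ δ) (n : ℕ) (φ : Ldlt.Formula (Fin n)) (hqf : φ.IsQF)
    (hst : ∀ I : Finset (Fin n),
      StableRel fun (a : {i : Fin n // i ∈ I} → ℕ) (b : {i : Fin n // i ∉ I} → ℕ) =>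
        RealizeLt δ φ fun i => if h : i ∈ I then a ⟨i, h⟩ else b ⟨i, h⟩) :
    ∃ ψ : Ld.Formula (Fin n), ψ.IsQF ∧ ∀ v : Fin n → ℕ, RealizeLt δ φ v ↔ RealizeD δ ψ v := by
  classical
  obtain ⟨M, hM⟩ := Stmt4Aux.qf_invariant δ hqf
  have hδ0 : 0 < δ := hδ
  have hInv : ∀ v w : Fin n → ℕ, Stmt4Aux.SameClamp δ M v w →
      (RealizeLt δ φ v ↔ RealizeLt δ φ w) := by
    intro v w h
    unfold RealizeLt Language.Formula.Realize
    exact hM v w h _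
  have hkey : ∀ v w : Fin n → ℕ, Stmt4Aux.Data δ M v w →
      (RealizeLt δ φ v ↔ RealizeLt δ φ w) :=
    fun v w hd => Stmt4Aux.keyLemma hδ (RealizeLt δ φ) hInv hst v w hd
  obtain ⟨pick, hpick⟩ : ∃ pick : (Fin n → Fin (M + 2)) × (Fin n → Fin δ) ×
      (Fin n → Fin n → Fin (M + 2)) → (Fin n → ℕ),
      ∀ d, (∃ x, Stmt4Aux.enc δ M hδ0 x = d ∧ RealizeLt δ φ x) →
        Stmt4Aux.enc δ M hδ0 (pick d) = d ∧ RealizeLt δ φ (pick d) := by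
    refine ⟨fun d => if h : ∃ x, Stmt4Aux.enc δ M hδ0 x = d ∧ RealizeLt δ φ x
      then h.choose else fun _ => 0, fun d h => ?_⟩
    dsimp only
    rw [dif_pos h]
    exact h.choose_spec
  set S : Finset ((Fin n → Fin (M + 2)) × (Fin n → Fin δ) × (Fin n → Fin n → Fin (M + 2))) :=
    Finset.univ.filter (fun d => ∃ x, Stmt4Aux.enc δ M hδ0 x = d ∧ RealizeLt δ φ x) with hS
  refine ⟨Stmt4Aux.orL (S.toList.map fun d => Stmt4Aux.clF δ M (pick d)), ?_, ?_⟩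
  · refine Stmt4Aux.orL_qf _ ?_
    intro f hf
    simp only [List.mem_map] at hf
    obtain ⟨d, -, rfl⟩ := hf
    exact Stmt4Aux.clF_qf δ M _
  · intro v
    rw [Stmt4Aux.realize_orL]
    constructor
    · intro hv
      have hex : ∃ x, Stmt4Aux.enc δ M hδ0 x = Stmt4Aux.enc δ M hδ0 v ∧ RealizeLt δ φ x :=
        ⟨v, rfl, hv⟩
      refine ⟨Stmt4Aux.clF δ M (pick (Stmt4Aux.enc δ M hδ0 v)), ?_, ?_⟩
      · simp only [List.mem_map]
        refine ⟨Stmt4Aux.enc δ M hδ0 v, ?_, rfl⟩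
        rw [Finset.mem_toList, hS]
        simp only [Finset.mem_filter, Finset.mem_univ, true_and]
        exact hex
      · rw [Stmt4Aux.realize_clF δ M hδ]
        exact Stmt4Aux.enc_fpEq δ M hδ0 _ _ (hpick _ hex).1
    · rintro ⟨f, hf, hrf⟩
      simp only [List.mem_map] at hf
      obtain ⟨d, hdS, rfl⟩ := hf
      rw [Finset.mem_toList, hS] at hdS
      simp only [Finset.mem_filter, Finset.mem_univ, true_and] at hdS
      have hspec := hpick d hdS
      rw [Stmt4Aux.realize_clF δ M hδ] at hrf
      have hdata := Stmt4Aux.fpEq_data δ M _ _ hrf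
      exact (hkey _ _ hdata).mp hspec.2
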